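/- arXiv:1711.11286 — 3 statements merged into one kernel-verified Lean document; each statement's English description precedes it below -/
import Mathlib

section
/- Suppose e : X × Y → (0,1) satisfies Rosenbaum's condition: 1/Λ ≤ OR(e(x,y1), e(x,y2)) ≤ Λ for all x, y1, y2, and e is compatible in the sense that for every x there exist y1, y2 with e(x,y1) ≤ e0(x) ≤ e(x,y2) (where e0(x) ∈ (0,1) is the baseline). Then e belongs to the marginal sensitivity model: 1/Λ ≤ OR(e(x,y), e0(x)) ≤ Λ for all x, y. -/
noncomputable def OR (p q : ℝ) : ℝ := (p / (1 - p)) / (q / (1 - q))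

lemma odds_mono {p q : ℝ} (hp : 0 < p) (hpq : p ≤ q) (hq : q < 1) :
    p / (1 - p) ≤ q / (1 - q) := by
  rw [div_le_div_iff₀ (by linarith) (by linarith)]
  nlinarith

theorem rosenbaum_compatible_subset_marginal
    {X Y : Type*} (Λ : ℝ) (hΛ : 1 ≤ Λ)
    (e : X → Y → ℝ) (e0 : X → ℝ)
    (he : ∀ x y, e x y ∈ Set.Ioo (0:ℝ) 1) (he0 : ∀ x, e0 x ∈ Set.Ioo (0:ℝ) 1)
    (hros : ∀ x y1 y2, 1 / Λ ≤ OR (e x y1) (e x y2) ∧ OR (e x y1) (e x y2) ≤ Λ)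
    (hcompat : ∀ x, ∃ y1 y2, e x y1 ≤ e0 x ∧ e0 x ≤ e x y2) :
    ∀ x y, 1 / Λ ≤ OR (e x y) (e0 x) ∧ OR (e x y) (e0 x) ≤ Λ := by
  intro x y
  obtain ⟨y1, y2, h1, h2⟩ := hcompat x
  obtain ⟨ha, hb⟩ := he x y
  obtain ⟨hc, hd⟩ := he0 x
  obtain ⟨h1a, h1b⟩ := he x y1
  obtain ⟨h2a, h2b⟩ := he x y2
  have hfa : 0 < e x y / (1 - e x y) := div_pos ha (by linarith)
  have hf0 : 0 < e0 x / (1 - e0 x) := div_pos hc (by linarith)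
  have hf1 : 0 < e x y1 / (1 - e x y1) := div_pos h1a (by linarith)
  have hf2 : 0 < e x y2 / (1 - e x y2) := div_pos h2a (by linarith)
  have hm1 : e x y1 / (1 - e x y1) ≤ e0 x / (1 - e0 x) := odds_mono h1a h1 hd
  have hm2 : e0 x / (1 - e0 x) ≤ e x y2 / (1 - e x y2) := odds_mono hc h2 h2b
  constructor
  · calc 1 / Λ ≤ OR (e x y) (e x y2) := (hros x y y2).1
    _ ≤ OR (e x y) (e0 x) := div_le_div_of_nonneg_left hfa.le hf0 hm2
  · calc OR (e x y) (e0 x) ≤ OR (e x y) (e x y1) :=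
      div_le_div_of_nonneg_left hfa.le hf1 hm1
    _ ≤ Λ := (hros x y y1).2
end

section
/- (Threshold form of the optimizer.) Let Y_1 ≥ Y_2 ≥ ⋯ ≥ Y_m be reals, a_1,…,a_m > 0, Λ > 1, and f(z) = (∑ Y_i(1+z_i a_i))/(∑(1+z_i a_i)) for z ∈ [1/Λ, Λ]^m. Then the maximum of f over [1/Λ, Λ]^m is attained at some z of threshold form: there exists k ∈ {0,1,…,m} with z_i = Λ for i ≤ k and z_i = 1/Λ for i > k. Hence max_{z∈[1/Λ,Λ]^m} f(z) = max_{0≤k≤m} f(z^{(k)}) where z^{(k)} is the threshold vector at k. -/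
open Finset in
private lemma lfp_aux_sum_update {m : ℕ} (c a z : Fin m → ℝ) (i : Fin m) (t : ℝ) :
    (∑ j, c j * (1 + Function.update z i t j * a j))
      = (∑ j, c j * (1 + z j * a j)) + c i * a i * (t - z i) := by
  have h2 : (∑ j, c j * (1 + Function.update z i t j * a j)) - (∑ j, c j * (1 + z j * a j))
      = ∑ j, c j * (Function.update z i t j - z j) * a j := by
    rw [← Finset.sum_sub_distrib]
    exact Finset.sum_congr rfl (fun j _ => by ring)
  have h3 : (∑ j, c j * (Function.update z i t j - z j) * a j) = c i * (t - z i) * a i := by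
    rw [Fintype.sum_eq_single i]
    · simp
    · intro j hj; simp [Function.update_of_ne hj]
  linarith

private lemma lfp_aux_Spos {m : ℕ} (a : Fin m → ℝ) (ha : ∀ i, 0 < a i) (hm : 0 < m)
    (z : Fin m → ℝ) (hz : ∀ i, 0 < z i) : 0 < ∑ j, (1 + z j * a j) := by
  have : Nonempty (Fin m) := Fin.pos_iff_nonempty.mp hm
  exact Finset.sum_pos (fun j _ => by nlinarith [hz j, ha j]) Finset.univ_nonempty

private lemma lfp_aux_step {m : ℕ} (Y a : Fin m → ℝ) (ha : ∀ i, 0 < a i) (hm : 0 < m)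
    (Λ : ℝ) (hΛinv : 0 < 1 / Λ)
    (z : Fin m → ℝ) (hz : ∀ i, z i ∈ Set.Icc (1/Λ) Λ) (i : Fin m) (t : ℝ)
    (ht : t ∈ Set.Icc (1/Λ) Λ)
    (hsign : 0 ≤ (t - z i) * (Y i * (∑ j, (1 + z j * a j)) - ∑ j, Y j * (1 + z j * a j))) :
    (∑ j, Y j * (1 + z j * a j)) / (∑ j, (1 + z j * a j))
      ≤ (∑ j, Y j * (1 + Function.update z i t j * a j))
          / (∑ j, (1 + Function.update z i t j * a j)) := by
  have hzpos : ∀ j, 0 < z j := fun j => lt_of_lt_of_le hΛinv (hz j).1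
  have hS : 0 < ∑ j, (1 + z j * a j) := lfp_aux_Spos a ha hm z hzpos
  have hS' : 0 < ∑ j, (1 + Function.update z i t j * a j) := by
    apply lfp_aux_Spos a ha hm
    intro j
    rcases eq_or_ne j i with rfl | hj
    · rw [Function.update_self]; exact lt_of_lt_of_le hΛinv ht.1
    · rw [Function.update_of_ne hj]; exact hzpos j
  have hNu : (∑ j, Y j * (1 + Function.update z i t j * a j))
      = (∑ j, Y j * (1 + z j * a j)) + Y i * a i * (t - z i) :=
    lfp_aux_sum_update Y a z i t
  have hSu : (∑ j, (1 + Function.update z i t j * a j))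
      = (∑ j, (1 + z j * a j)) + 1 * a i * (t - z i) := by
    have := lfp_aux_sum_update (fun _ => (1:ℝ)) a z i t
    simpa using this
  rw [div_le_div_iff₀ hS hS', hNu, hSu]
  have hterm : 0 ≤ a i * ((t - z i) *
      (Y i * (∑ j, (1 + z j * a j)) - ∑ j, Y j * (1 + z j * a j))) :=
    mul_nonneg (le_of_lt (ha i)) hsign
  nlinarith [hterm]

theorem lfp_maximum_attained_at_threshold
    (m : ℕ) (Y a : Fin m → ℝ) (ha : ∀ i, 0 < a i)
    (hY : ∀ i j : Fin m, i ≤ j → Y j ≤ Y i) (Λ : ℝ) (hΛ : 1 < Λ)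
    (f : (Fin m → ℝ) → ℝ)
    (hf : ∀ z, f z = (∑ i, Y i * (1 + z i * a i)) / (∑ i, (1 + z i * a i))) :
    (∃ k : ℕ, k ≤ m ∧
      ∀ z : Fin m → ℝ, (∀ i, z i ∈ Set.Icc (1 / Λ) Λ) →
        f z ≤ f (fun j : Fin m => if (j : ℕ) < k then Λ else 1 / Λ)) ∧
    IsGreatest {v : ℝ | ∃ k : ℕ, k ≤ m ∧
        v = f (fun j : Fin m => if (j : ℕ) < k then Λ else 1 / Λ)}
      (sSup (f '' {z | ∀ i, z i ∈ Set.Icc (1 / Λ) Λ})) := by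
  classical
  rcases Nat.eq_zero_or_pos m with hm | hm
  · subst hm
    have hf0 : ∀ z : Fin 0 → ℝ, f z = 0 := by intro z; simp [hf]
    constructor
    · exact ⟨0, le_refl 0, fun z _ => by rw [hf0, hf0]⟩
    · have himg : f '' {z : Fin 0 → ℝ | ∀ i, z i ∈ Set.Icc (1/Λ) Λ} = {0} := by
        ext v
        constructor
        · rintro ⟨z, _, rfl⟩; simp [hf0]
        · rintro rfl; exact ⟨fun _ => 0, fun i => i.elim0, hf0 _⟩
      rw [himg, csSup_singleton]
      constructor
      · exact ⟨0, le_refl 0, (hf0 _).symm⟩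
      · rintro v ⟨k, _, rfl⟩; simp [hf0]
  · have hΛ0 : 0 < Λ := lt_trans one_pos hΛ
    have hinv : 0 < 1/Λ := by positivity
    have hle : 1/Λ ≤ Λ := by rw [div_le_iff₀ hΛ0]; nlinarith
    set box : Set (Fin m → ℝ) := {z | ∀ i, z i ∈ Set.Icc (1/Λ) Λ} with hboxdef
    have hboxmem : ∀ z : Fin m → ℝ, z ∈ box ↔ ∀ i, z i ∈ Set.Icc (1/Λ) Λ := fun z => Iff.rfl
    have hboxeq : box = Set.univ.pi (fun _ : Fin m => Set.Icc (1/Λ) Λ) := by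
      ext z
      rw [Set.mem_univ_pi]
      exact Iff.rfl
    have hcomp : IsCompact box := by
      rw [hboxeq]; exact isCompact_univ_pi (fun _ => isCompact_Icc)
    have hboxne : box.Nonempty := ⟨fun _ => Λ, fun i => ⟨hle, le_refl Λ⟩⟩
    have hSpos : ∀ z ∈ box, 0 < ∑ j, (1 + z j * a j) := by
      intro z hz
      exact lfp_aux_Spos a ha hm z (fun i => lt_of_lt_of_le hinv (hz i).1)
    have hcont : ContinuousOn f box := by
      have hfeq : f = fun z : Fin m → ℝ =>
          (∑ i, Y i * (1 + z i * a i)) / (∑ i, (1 + z i * a i)) := funext hf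
      rw [hfeq]
      apply ContinuousOn.div
      · apply Continuous.continuousOn
        apply continuous_finset_sum
        intro i _
        exact continuous_const.mul (continuous_const.add
          ((continuous_apply i).mul continuous_const))
      · apply Continuous.continuousOn
        apply continuous_finset_sum
        intro i _
        exact continuous_const.add ((continuous_apply i).mul continuous_const)
      · intro z hz; exact ne_of_gt (hSpos z hz)
    obtain ⟨zs, hzs, hmaxOn⟩ := hcomp.exists_isMaxOn hboxne hcont
    have hmax : ∀ z ∈ box, f z ≤ f zs := fun z hz => hmaxOn hz
    set sY : Finset (Fin m) := Finset.univ.filter (fun i => f zs < Y i) with hsYdef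
    set k := sY.card with hkdef
    have hkm : k ≤ m := le_trans (Finset.card_filter_le _ _) (by simp)
    have hmem : ∀ i : Fin m, (i : ℕ) < k ↔ f zs < Y i := by
      intro i
      constructor
      · intro hik
        by_contra hni
        have hsub : sY ⊆ Finset.Iio i := by
          intro j hj
          rw [Finset.mem_Iio]
          by_contra hji
          have : i ≤ j := not_lt.mp hji
          have : Y j ≤ Y i := hY i j this
          rw [hsYdef, Finset.mem_filter] at hj
          exact hni (lt_of_lt_of_le hj.2 this)
        have := Finset.card_le_card hsub
        rw [Fin.card_Iio] at this
        omega
      · intro hi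
        have hsub : Finset.Iic i ⊆ sY := by
          intro j hj
          rw [Finset.mem_Iic] at hj
          rw [hsYdef, Finset.mem_filter]
          exact ⟨Finset.mem_univ j, lt_of_lt_of_le hi (hY j i hj)⟩
        have := Finset.card_le_card hsub
        rw [Fin.card_Iic] at this
        omega
    have key : ∀ s : Finset (Fin m), ∃ v : Fin m → ℝ, v ∈ box ∧
        (∀ i ∈ s, v i = (if (i : ℕ) < k then Λ else 1/Λ)) ∧
        (∀ i ∉ s, v i = zs i) ∧ f zs ≤ f v := by
      intro s
      induction s using Finset.induction_on with
      | empty => exact ⟨zs, hzs, by simp, fun i _ => rfl, le_refl _⟩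
      | @insert b s hbs ih =>
        obtain ⟨v, hv1, hv2, hv3, hv4⟩ := ih
        have hfv : f v = f zs := le_antisymm (hmax v hv1) hv4
        set t : ℝ := if (b : ℕ) < k then Λ else 1/Λ with htdef
        have ht : t ∈ Set.Icc (1/Λ) Λ := by
          rw [htdef]; split_ifs
          · exact ⟨hle, le_refl Λ⟩
          · exact ⟨le_refl _, hle⟩
        have hS : 0 < ∑ j, (1 + v j * a j) := hSpos v hv1
        have hsign : 0 ≤ (t - v b) *
            (Y b * (∑ j, (1 + v j * a j)) - ∑ j, Y j * (1 + v j * a j)) := by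
          have hfvval : f v = (∑ j, Y j * (1 + v j * a j)) / (∑ j, (1 + v j * a j)) := hf v
          rw [htdef]
          split_ifs with hb
          · have hYb : f zs < Y b := (hmem b).mp hb
            have : (∑ j, Y j * (1 + v j * a j)) < Y b * (∑ j, (1 + v j * a j)) := by
              rw [← hfv, hfvval] at hYb
              exact (div_lt_iff₀ hS).mp hYb
            have hvb : v b ≤ Λ := (hv1 b).2
            nlinarith
          · have hYb : Y b ≤ f zs := le_of_not_gt (fun h => hb ((hmem b).mpr h))
            have : Y b * (∑ j, (1 + v j * a j)) ≤ (∑ j, Y j * (1 + v j * a j)) := by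
              rw [← hfv, hfvval] at hYb
              exact (le_div_iff₀ hS).mp hYb
            have hvb : 1/Λ ≤ v b := (hv1 b).1
            nlinarith
        have hstep : f v ≤ f (Function.update v b t) := by
          rw [hf v, hf (Function.update v b t)]
          exact lfp_aux_step Y a ha hm Λ hinv v hv1 b t ht hsign
        refine ⟨Function.update v b t, ?_, ?_, ?_, le_trans hv4 hstep⟩
        · intro i
          rcases eq_or_ne i b with rfl | hib
          · rw [Function.update_self]; exact ht
          · rw [Function.update_of_ne hib]; exact hv1 i
        · intro i hi
          rcases Finset.mem_insert.mp hi with rfl | his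
          · rw [Function.update_self]
          · have hib : i ≠ b := by rintro rfl; exact hbs his
            rw [Function.update_of_ne hib]
            exact hv2 i his
        · intro i hi
          rw [Finset.mem_insert, not_or] at hi
          rw [Function.update_of_ne hi.1]
          exact hv3 i hi.2
    obtain ⟨v, hv1, hv2, hv3, hv4⟩ := key Finset.univ
    have hveq : v = fun j : Fin m => if (j : ℕ) < k then Λ else 1/Λ :=
      funext fun i => hv2 i (Finset.mem_univ i)
    set w : Fin m → ℝ := fun j : Fin m => if (j : ℕ) < k then Λ else 1/Λ with hwdef
    have hthbox : ∀ k' : ℕ, (fun j : Fin m => if (j : ℕ) < k' then Λ else 1/Λ) ∈ box := by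
      intro k' i
      dsimp only
      split_ifs
      · exact ⟨hle, le_refl Λ⟩
      · exact ⟨le_refl _, hle⟩
    have hfw : f zs ≤ f w := hveq ▸ hv4
    have hwmax : ∀ z ∈ box, f z ≤ f w := fun z hz => le_trans (hmax z hz) hfw
    constructor
    · exact ⟨k, hkm, fun z hz => hwmax z hz⟩
    · have hgr : IsGreatest (f '' box) (f w) :=
        ⟨⟨w, hthbox k, rfl⟩, by rintro y ⟨z, hz, rfl⟩; exact hwmax z hz⟩
      rw [hgr.csSup_eq]
      constructor
      · exact ⟨k, hkm, rfl⟩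
      · rintro y ⟨k', _, rfl⟩
        exact hwmax _ (hthbox k')
end

section
/- (Charnes–Cooper transformation.) Let f(z) = (c'z + c0)/(d'z + d0) where d'z + d0 > 0 for all z in the polytope P = {z : Az ≤ b}. The change of variables z̄ = z/(d'z + d0), t = 1/(d'z + d0) defines a bijection between P and the set P' = {(z̄,t) : t > 0, A z̄ ≤ b t, d'z̄ + d0 t = 1}, under which f(z) = c'z̄ + c0 t. Hence sup_{z∈P} f(z) = sup_{(z̄,t)∈P'} (c'z̄ + c0 t). -/
open Matrix in
theorem charnes_cooper_transformation
    (p m : ℕ) (A : Matrix (Fin p) (Fin m) ℝ) (b : Fin p → ℝ)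
    (c d : Fin m → ℝ) (c0 d0 : ℝ)
    (P : Set (Fin m → ℝ)) (hP : P = {z | A.mulVec z ≤ b}) (hPne : P.Nonempty)
    (hden : ∀ z ∈ P, 0 < d ⬝ᵥ z + d0)
    (f : (Fin m → ℝ) → ℝ) (hf : ∀ z, f z = (c ⬝ᵥ z + c0) / (d ⬝ᵥ z + d0))
    (P' : Set ((Fin m → ℝ) × ℝ))
    (hP' : P' = {q | 0 < q.2 ∧ A.mulVec q.1 ≤ q.2 • b ∧ d ⬝ᵥ q.1 + d0 * q.2 = 1})
    (φ : (Fin m → ℝ) → (Fin m → ℝ) × ℝ)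
    (hφ : ∀ z, φ z = ((d ⬝ᵥ z + d0)⁻¹ • z, (d ⬝ᵥ z + d0)⁻¹)) :
    Set.BijOn φ P P' ∧
    (∀ q ∈ P', q.2⁻¹ • q.1 ∈ P ∧ φ (q.2⁻¹ • q.1) = q) ∧
    (∀ z ∈ P, f z = c ⬝ᵥ (φ z).1 + c0 * (φ z).2) ∧
    sSup (f '' P) = sSup ((fun q => c ⬝ᵥ q.1 + c0 * q.2) '' P') := by
  -- forward maps to
  have hmaps : ∀ z ∈ P, φ z ∈ P' := by
    intro z hz
    have hd := hden z hz
    have hAz : A.mulVec z ≤ b := by rwa [hP] at hz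
    rw [hφ, hP']
    refine ⟨by positivity, ?_, ?_⟩
    · intro i
      have : ((d ⬝ᵥ z + d0)⁻¹ • A.mulVec z) i ≤ ((d ⬝ᵥ z + d0)⁻¹ • b) i := by
        simp only [Pi.smul_apply, smul_eq_mul]
        exact mul_le_mul_of_nonneg_left (hAz i) (by positivity)
      simpa [Matrix.mulVec_smul] using this
    · simp only [dotProduct_smul, smul_eq_mul]
      field_simp
  -- inverse
  have hinv : ∀ q ∈ P', q.2⁻¹ • q.1 ∈ P ∧ φ (q.2⁻¹ • q.1) = q := by
    intro q hq
    rw [hP'] at hq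
    obtain ⟨ht, hA, hd1⟩ := hq
    have htne : q.2 ≠ 0 := ne_of_gt ht
    have hmem : q.2⁻¹ • q.1 ∈ P := by
      rw [hP]
      intro i
      have : (q.2⁻¹ • A.mulVec q.1) i ≤ (q.2⁻¹ • (q.2 • b)) i := by
        simp only [Pi.smul_apply, smul_eq_mul]
        exact mul_le_mul_of_nonneg_left (hA i) (by positivity)
      simp only [Pi.smul_apply, smul_eq_mul, ← mul_assoc, inv_mul_cancel₀ htne, one_mul] at this
      simpa [Matrix.mulVec_smul] using this
    have hden' : d ⬝ᵥ (q.2⁻¹ • q.1) + d0 = q.2⁻¹ := by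
      simp only [dotProduct_smul, smul_eq_mul]
      field_simp
      linarith [hd1]
    refine ⟨hmem, ?_⟩
    rw [hφ, hden']
    simp [smul_smul, inv_inv, mul_inv_cancel₀ htne]
  have hbij : Set.BijOn φ P P' := by
    refine ⟨hmaps, ?_, ?_⟩
    · intro z₁ h₁ z₂ h₂ heq
      have e1 := (hinv (φ z₁) (hmaps z₁ h₁)).2
      have d1 : (d ⬝ᵥ z₁ + d0) ≠ 0 := ne_of_gt (hden z₁ h₁)
      have d2 : (d ⬝ᵥ z₂ + d0) ≠ 0 := ne_of_gt (hden z₂ h₂)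
      have key : ∀ z ∈ P, (φ z).2⁻¹ • (φ z).1 = z := by
        intro z hz
        have dz : (d ⬝ᵥ z + d0) ≠ 0 := ne_of_gt (hden z hz)
        rw [hφ]
        simp [smul_smul, inv_inv, mul_inv_cancel₀ dz]
      calc z₁ = (φ z₁).2⁻¹ • (φ z₁).1 := (key z₁ h₁).symm
        _ = (φ z₂).2⁻¹ • (φ z₂).1 := by rw [heq]
        _ = z₂ := key z₂ h₂
    · intro q hq
      exact ⟨q.2⁻¹ • q.1, (hinv q hq).1, (hinv q hq).2⟩
  have hval : ∀ z ∈ P, f z = c ⬝ᵥ (φ z).1 + c0 * (φ z).2 := by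
    intro z hz
    have dz : (d ⬝ᵥ z + d0) ≠ 0 := ne_of_gt (hden z hz)
    rw [hf, hφ]
    simp only [dotProduct_smul, smul_eq_mul]
    field_simp
  refine ⟨hbij, hinv, hval, ?_⟩
  congr 1
  ext y
  constructor
  · rintro ⟨z, hz, rfl⟩
    exact ⟨φ z, hmaps z hz, (hval z hz).symm⟩
  · rintro ⟨q, hq, rfl⟩
    refine ⟨q.2⁻¹ • q.1, (hinv q hq).1, ?_⟩
    rw [hval _ (hinv q hq).1, (hinv q hq).2]
end
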